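/- arXiv:2203.12567 — 4 statements merged into one kernel-verified Lean document; each statement's English description precedes it below -/
import Mathlib

section
/- Assume q := sup_{m∈ℤ⁺} Σ_{n∈ℤ⁺} c_n ‖𝒢(m,n+1)‖ < ∞. For η ∈ 𝓜 define F(η)(n,φ) = Σ_{m∈ℤ⁺} 𝒢(n,m+1) Γ f_m(𝒜(m,n)φ + η^m(𝒜(m,n)φ)) for n ∈ ℤ⁺ and φ ∈ F_n. Then this series converges in B, F(η) ∈ 𝓜, and ‖F(η)‖_∞ ≤ K(1)q, where K is the function from axiom (A). -/
noncomputable section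

open Filter

/-- The nonpositive integers. -/
abbrev Zneg : Type := {j : ℤ // j ≤ 0}

/-- The segment `x_m : ℤ⁻ → X` of a sequence `x : ℤ → X`, i.e. `x_m(j) = x(m+j)`. -/
def seg {X : Type*} (x : ℤ → X) (m : ℤ) : Zneg → X := fun j => x (m + j.1)

variable {X : Type*} [NormedAddCommGroup X] [NormedSpace ℝ X] [CompleteSpace X]
variable {𝓑 : Type*} [NormedAddCommGroup 𝓑] [NormedSpace ℝ 𝓑] [CompleteSpace 𝓑]

/-- Axiom (A) for a Banach space `𝓑` of sequences `ℤ⁻ → X` (represented through an injective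
linear map `ι : 𝓑 → (ℤ⁻ → X)`), with constants `J > 0` and `K, M : ℤ⁺ → [0,∞)`: whenever
`x : ℤ → X` has `x_0 ∈ 𝓑`, then `x_n ∈ 𝓑` and
`J‖x(n)‖ ≤ ‖x_n‖_𝓑 ≤ K(n) sup_{0≤j≤n}‖x(j)‖ + M(n)‖x_0‖_𝓑` for all `n ∈ ℤ⁺`. -/
def AxiomA (ι : 𝓑 →ₗ[ℝ] (Zneg → X)) (J : ℝ) (K M : ℕ → ℝ) : Prop :=
  0 < J ∧ (∀ n, 0 ≤ K n) ∧ (∀ n, 0 ≤ M n) ∧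
    ∀ (x : ℤ → X) (φ₀ : 𝓑), ι φ₀ = seg x 0 →
      ∀ n : ℕ, ∃ φₙ : 𝓑, ι φₙ = seg x (n : ℤ) ∧
        J * ‖x (n : ℤ)‖ ≤ ‖φₙ‖ ∧
        ‖φₙ‖ ≤ K n * (⨆ j : Fin (n + 1), ‖x ((j : ℕ) : ℤ)‖) + M n * ‖φ₀‖

/-- The sequence `Γv : ℤ⁻ → X`, `(Γv)(0) = v` and `(Γv)(j) = 0` for `j < 0`. -/
def gammaSeq {X : Type*} [NormedAddCommGroup X] (v : X) : Zneg → X :=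
  fun j => if j.1 = 0 then v else 0

/-- `x : ℤ → X` solves the linear equation `x(m+1) = A_m x_m` for all `m ≥ n`,
with all segments `x_m` (for `m ≥ n`) belonging to `𝓑`. -/
def IsLinSolFrom (ι : 𝓑 →ₗ[ℝ] (Zneg → X)) (A : ℕ → 𝓑 →L[ℝ] X)
    (x : ℤ → X) (n : ℕ) : Prop :=
  ∀ m : ℕ, n ≤ m → ∃ ψ : 𝓑, ι ψ = seg x (m : ℤ) ∧ x ((m : ℤ) + 1) = A m ψ

/-- `x : ℤ → X` solves the semilinear equation `x(m+1) = A_m x_m + f_m(x_m)` for all `m ≥ n`,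
with all segments `x_m` (for `m ≥ n`) belonging to `𝓑`. -/
def IsSemiSolFrom (ι : 𝓑 →ₗ[ℝ] (Zneg → X)) (A : ℕ → 𝓑 →L[ℝ] X)
    (f : ℕ → 𝓑 → X) (x : ℤ → X) (n : ℕ) : Prop :=
  ∀ m : ℕ, n ≤ m → ∃ ψ : 𝓑, ι ψ = seg x (m : ℤ) ∧ x ((m : ℤ) + 1) = A m ψ + f m ψ

/-- The Green operator `𝒢(m,n) = 𝒜(m,n)P_n` for `m ≥ n`, `𝒢(m,n) = -𝒜(m,n)Q_n` for `m < n`. -/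
def Green (𝒜 : ℕ → ℕ → 𝓑 →L[ℝ] 𝓑) (P : ℕ → 𝓑 →L[ℝ] 𝓑) (m n : ℕ) : 𝓑 →L[ℝ] 𝓑 :=
  if n ≤ m then (𝒜 m n).comp (P n)
  else -((𝒜 m n).comp (ContinuousLinearMap.id ℝ 𝓑 - P n))

/-- `F_n = Ker P_n`. -/
abbrev Fn (P : ℕ → 𝓑 →L[ℝ] 𝓑) (n : ℕ) := {φ : 𝓑 // P n φ = 0}

/-- `𝒜(m,n)` restricted to a map `F_n → F_m` (using the kernel invariance). -/
def kerMap (𝒜 : ℕ → ℕ → 𝓑 →L[ℝ] 𝓑) (P : ℕ → 𝓑 →L[ℝ] 𝓑)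
    (hker : ∀ (m n : ℕ) (φ : 𝓑), P n φ = 0 → P m (𝒜 m n φ) = 0)
    (m n : ℕ) (φ : Fn P n) : Fn P m :=
  ⟨𝒜 m n φ.1, hker m n φ.1 φ.2⟩

/-- Membership in `𝓜`: `η = (η^n)_{n∈ℤ⁺}` with `η^n : F_n → 𝓑` continuous and
`‖η‖_∞ = sup_{n,φ} ‖η^n(φ)‖ < ∞`. -/
def inM (P : ℕ → 𝓑 →L[ℝ] 𝓑) (η : ∀ n : ℕ, Fn P n → 𝓑) : Prop :=
  (∀ n, Continuous (η n)) ∧ ∃ C : ℝ, ∀ (n : ℕ) (φ : Fn P n), ‖η n φ‖ ≤ C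

/-- The supremum norm `‖η‖_∞ = sup_{n∈ℤ⁺, φ∈F_n} ‖η^n(φ)‖` on `𝓜`. -/
def Mnorm (P : ℕ → 𝓑 →L[ℝ] 𝓑) (η : ∀ n : ℕ, Fn P n → 𝓑) : ℝ :=
  ⨆ p : Σ n : ℕ, Fn P n, ‖η p.1 p.2‖

/-- The map `F(η)(n,φ) = Σ_{m∈ℤ⁺} 𝒢(n,m+1) Γ f_m(𝒜(m,n)φ + η^m(𝒜(m,n)φ))` for `φ ∈ F_n`. -/
def Fmap (𝒜 : ℕ → ℕ → 𝓑 →L[ℝ] 𝓑) (P : ℕ → 𝓑 →L[ℝ] 𝓑)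
    (hker : ∀ (m n : ℕ) (φ : 𝓑), P n φ = 0 → P m (𝒜 m n φ) = 0)
    (γ : X → 𝓑) (f : ℕ → 𝓑 → X)
    (η : ∀ n : ℕ, Fn P n → 𝓑) (n : ℕ) (φ : Fn P n) : 𝓑 :=
  ∑' m : ℕ, Green 𝒜 P n (m + 1)
      (γ (f m (𝒜 m n φ.1 + η m (kerMap 𝒜 P hker m n φ))))

/-- Assume `q := sup_{m∈ℤ⁺} Σ_{n∈ℤ⁺} c_n ‖𝒢(m,n+1)‖ < ∞`. For `η ∈ 𝓜` the series
`F(η)(n,φ) = Σ_{m∈ℤ⁺} 𝒢(n,m+1) Γ f_m(𝒜(m,n)φ + η^m(𝒜(m,n)φ))` (for `n ∈ ℤ⁺`, `φ ∈ F_n`)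
converges in `𝓑`, `F(η) ∈ 𝓜`, and `‖F(η)‖_∞ ≤ K(1)q`, with `K` from axiom (A). -/
theorem stmt_6
    (ι : 𝓑 →ₗ[ℝ] (Zneg → X)) (hι : Function.Injective ι)
    (J : ℝ) (K M : ℕ → ℝ) (hAx : AxiomA ι J K M)
    (A : ℕ → 𝓑 →L[ℝ] X) (𝒜 : ℕ → ℕ → 𝓑 →L[ℝ] 𝓑)
    -- for `n ≤ m`, `𝒜(m,n)` is the solution operator of the linear equation
    (hsolA : ∀ (k : ℕ) (ψ : 𝓑) (y : ℤ → X), ι ψ = seg y (k : ℤ) → IsLinSolFrom ι A y k →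
      ∀ m : ℕ, k ≤ m → ι (𝒜 m k ψ) = seg y (m : ℤ))
    -- the projections `P_n`, commuting with the evolution family
    (P : ℕ → 𝓑 →L[ℝ] 𝓑) (hproj : ∀ n, (P n).comp (P n) = P n)
    (hcomm : ∀ m n : ℕ, n ≤ m → (P m).comp (𝒜 m n) = (𝒜 m n).comp (P n))
    -- `𝒜(m,n)` maps `F_n = Ker P_n` into `F_m`, and for `m ≤ n`, `𝒜(m,n)` is the inverse of
    -- `𝒜(n,m)|_{Ker P_m} : Ker P_m → Ker P_n`
    (hker : ∀ (m n : ℕ) (φ : 𝓑), P n φ = 0 → P m (𝒜 m n φ) = 0)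
    (hinv₁ : ∀ m n : ℕ, m ≤ n → ∀ φ : 𝓑, P n φ = 0 → 𝒜 n m (𝒜 m n φ) = φ)
    (hinv₂ : ∀ m n : ℕ, m ≤ n → ∀ φ : 𝓑, P m φ = 0 → 𝒜 m n (𝒜 n m φ) = φ)
    (γ : X → 𝓑) (hγ : ∀ v : X, ι (γ v) = gammaSeq v)
    (f : ℕ → 𝓑 → X) (c : ℕ → ℝ) (hc : ∀ m, 0 < c m) (hf0 : ∀ m, f m 0 = 0)
    (hf : ∀ (m : ℕ) (φ ψ : 𝓑), ‖f m φ - f m ψ‖ ≤ c m * min 1 ‖φ - ψ‖)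
    -- `q := sup_{m∈ℤ⁺} Σ_{n∈ℤ⁺} c_n ‖𝒢(m,n+1)‖ < ∞`
    (hqsum : ∀ m : ℕ, Summable fun k : ℕ => c k * ‖Green 𝒜 P m (k + 1)‖)
    (hqbdd : BddAbove (Set.range fun m : ℕ => ∑' k : ℕ, c k * ‖Green 𝒜 P m (k + 1)‖))
    (η : ∀ n : ℕ, Fn P n → 𝓑) (hη : inM P η) :
    (∀ (n : ℕ) (φ : Fn P n),
        Summable fun m : ℕ => Green 𝒜 P n (m + 1)
          (γ (f m (𝒜 m n φ.1 + η m (kerMap 𝒜 P hker m n φ)))))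
    ∧ inM P (Fmap 𝒜 P hker γ f η)
    ∧ (∀ (n : ℕ) (φ : Fn P n), ‖Fmap 𝒜 P hker γ f η n φ‖ ≤
        K 1 * ⨆ m : ℕ, ∑' k : ℕ, c k * ‖Green 𝒜 P m (k + 1)‖) := by

  obtain ⟨hJ, hK, hM, hax⟩ := hAx
  -- bound on γ
  have hγnorm : ∀ v : X, ‖γ v‖ ≤ K 1 * ‖v‖ := by
    intro v
    set x : ℤ → X := fun j => if j = 1 then v else 0 with hx
    have hseg0 : ι (0 : 𝓑) = seg x 0 := by
      rw [map_zero]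
      funext j
      show (0 : X) = x (0 + j.1)
      have hj := j.2
      simp only [hx]
      rw [if_neg (by omega)]
    obtain ⟨φ₁, hφι, _, hφb⟩ := hax x 0 hseg0 1
    have hγeq : γ v = φ₁ := by
      apply hι
      rw [hγ, hφι]
      funext j
      show gammaSeq v j = x ((1 : ℤ) + j.1)
      simp only [gammaSeq, hx]
      by_cases h : j.1 = 0
      · rw [if_pos h, if_pos (by omega)]
      · rw [if_neg h, if_neg (by omega)]
    have hs : (⨆ j : Fin 2, ‖x ((j : ℕ) : ℤ)‖) ≤ ‖v‖ := by
      apply ciSup_le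
      intro j
      fin_cases j
      · simp only [hx]
        norm_num
      · simp only [hx]
        norm_num
    calc ‖γ v‖ = ‖φ₁‖ := by rw [hγeq]
      _ ≤ K 1 * (⨆ j : Fin 2, ‖x ((j : ℕ) : ℤ)‖) + M 1 * ‖(0 : 𝓑)‖ := hφb
      _ = K 1 * (⨆ j : Fin 2, ‖x ((j : ℕ) : ℤ)‖) := by rw [norm_zero, mul_zero, add_zero]
      _ ≤ K 1 * ‖v‖ := mul_le_mul_of_nonneg_left hs (hK 1)
  -- γ respects subtraction
  have hγsub : ∀ v w : X, γ (v - w) = γ v - γ w := by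
    intro v w
    apply hι
    rw [map_sub, hγ, hγ, hγ]
    funext j
    show gammaSeq (v - w) j = gammaSeq v j - gammaSeq w j
    simp only [gammaSeq]
    by_cases h : j.1 = 0 <;> simp [h]
  have hγcont : Continuous γ := by
    have : LipschitzWith ⟨max (K 1) 0, le_max_right _ _⟩ γ := by
      apply LipschitzWith.of_dist_le_mul
      intro v w
      rw [dist_eq_norm, dist_eq_norm, ← hγsub]
      calc ‖γ (v - w)‖ ≤ K 1 * ‖v - w‖ := hγnorm _
        _ ≤ max (K 1) 0 * ‖v - w‖ :=
            mul_le_mul_of_nonneg_right (le_max_left _ _) (norm_nonneg _)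
    exact this.continuous
  -- bound on f
  have hfb : ∀ (m : ℕ) (ψ : 𝓑), ‖f m ψ‖ ≤ c m := by
    intro m ψ
    calc ‖f m ψ‖ = ‖f m ψ - f m 0‖ := by rw [hf0, sub_zero]
      _ ≤ c m * min 1 ‖ψ - 0‖ := hf m ψ 0
      _ ≤ c m * 1 := mul_le_mul_of_nonneg_left (min_le_left _ _) (hc m).le
      _ = c m := mul_one _
  have hfcont : ∀ m : ℕ, Continuous (f m) := by
    intro m
    have : LipschitzWith (Real.toNNReal (c m)) (f m) := by
      apply LipschitzWith.of_dist_le_mul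
      intro φ ψ
      rw [dist_eq_norm, dist_eq_norm]
      calc ‖f m φ - f m ψ‖ ≤ c m * min 1 ‖φ - ψ‖ := hf m φ ψ
        _ ≤ c m * ‖φ - ψ‖ := mul_le_mul_of_nonneg_left (min_le_right _ _) (hc m).le
        _ ≤ (Real.toNNReal (c m) : ℝ) * ‖φ - ψ‖ :=
            mul_le_mul_of_nonneg_right (Real.le_coe_toNNReal _) (norm_nonneg _)
    exact this.continuous
  -- termwise bound
  have hterm : ∀ (n : ℕ) (φ : Fn P n) (m : ℕ),
      ‖Green 𝒜 P n (m + 1) (γ (f m (𝒜 m n φ.1 + η m (kerMap 𝒜 P hker m n φ))))‖ ≤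
        K 1 * (c m * ‖Green 𝒜 P n (m + 1)‖) := by
    intro n φ m
    set ψ := 𝒜 m n φ.1 + η m (kerMap 𝒜 P hker m n φ)
    calc ‖Green 𝒜 P n (m + 1) (γ (f m ψ))‖
        ≤ ‖Green 𝒜 P n (m + 1)‖ * ‖γ (f m ψ)‖ := ContinuousLinearMap.le_opNorm _ _
      _ ≤ ‖Green 𝒜 P n (m + 1)‖ * (K 1 * ‖f m ψ‖) :=
          mul_le_mul_of_nonneg_left (hγnorm _) (norm_nonneg _)
      _ ≤ ‖Green 𝒜 P n (m + 1)‖ * (K 1 * c m) := by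
          apply mul_le_mul_of_nonneg_left _ (norm_nonneg _)
          exact mul_le_mul_of_nonneg_left (hfb m ψ) (hK 1)
      _ = K 1 * (c m * ‖Green 𝒜 P n (m + 1)‖) := by ring
  have hu : ∀ n : ℕ, Summable fun m : ℕ => K 1 * (c m * ‖Green 𝒜 P n (m + 1)‖) :=
    fun n => (hqsum n).mul_left _
  have hSum : ∀ (n : ℕ) (φ : Fn P n),
      Summable fun m : ℕ => Green 𝒜 P n (m + 1)
        (γ (f m (𝒜 m n φ.1 + η m (kerMap 𝒜 P hker m n φ)))) := by
    intro n φ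
    exact Summable.of_norm_bounded (hu n) (hterm n φ)
  -- norm bound on Fmap
  have hbound : ∀ (n : ℕ) (φ : Fn P n), ‖Fmap 𝒜 P hker γ f η n φ‖ ≤
      K 1 * ⨆ m : ℕ, ∑' k : ℕ, c k * ‖Green 𝒜 P m (k + 1)‖ := by
    intro n φ
    have hns : Summable fun m : ℕ => ‖Green 𝒜 P n (m + 1)
        (γ (f m (𝒜 m n φ.1 + η m (kerMap 𝒜 P hker m n φ))))‖ :=
      Summable.of_nonneg_of_le (fun m => norm_nonneg _) (hterm n φ) (hu n)
    calc ‖Fmap 𝒜 P hker γ f η n φ‖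
        ≤ ∑' m : ℕ, ‖Green 𝒜 P n (m + 1)
            (γ (f m (𝒜 m n φ.1 + η m (kerMap 𝒜 P hker m n φ))))‖ :=
          norm_tsum_le_tsum_norm hns
      _ ≤ ∑' m : ℕ, K 1 * (c m * ‖Green 𝒜 P n (m + 1)‖) :=
          Summable.tsum_le_tsum (hterm n φ) hns (hu n)
      _ = K 1 * ∑' m : ℕ, c m * ‖Green 𝒜 P n (m + 1)‖ := tsum_mul_left
      _ ≤ K 1 * ⨆ m : ℕ, ∑' k : ℕ, c k * ‖Green 𝒜 P m (k + 1)‖ :=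
          mul_le_mul_of_nonneg_left (le_ciSup hqbdd n) (hK 1)
  refine ⟨hSum, ⟨?_, ?_⟩, hbound⟩
  · -- continuity
    intro n
    have : Continuous fun φ : Fn P n => ∑' m : ℕ, Green 𝒜 P n (m + 1)
        (γ (f m (𝒜 m n φ.1 + η m (kerMap 𝒜 P hker m n φ)))) := by
      apply continuous_tsum _ (hu n) (fun m φ => hterm n φ m)
      intro m
      have hkc : Continuous (kerMap 𝒜 P hker m n) :=
        Continuous.subtype_mk ((𝒜 m n).continuous.comp continuous_subtype_val) _
      exact (Green 𝒜 P n (m + 1)).continuous.comp (hγcont.comp ((hfcont m).comp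
        (((𝒜 m n).continuous.comp continuous_subtype_val).add ((hη.1 m).comp hkc))))
    exact this
  · exact ⟨K 1 * ⨆ m : ℕ, ∑' k : ℕ, c k * ‖Green 𝒜 P m (k + 1)‖, hbound⟩
end
end

section
/- Assume q := sup_{m∈ℤ⁺} Σ_{n∈ℤ⁺} c_n ‖𝒢(m,n+1)‖ < ∞, and let F : 𝓜 → 𝓜 be defined by F(η)(n,φ) = Σ_{m∈ℤ⁺} 𝒢(n,m+1) Γ f_m(𝒜(m,n)φ + η^m(𝒜(m,n)φ)). Then for all η, ξ ∈ 𝓜, ‖F(η) − F(ξ)‖_∞ ≤ K(1) q ‖η − ξ‖_∞, where K is the function from axiom (A). In particular, if K(1)q < 1 then F is a contraction and has a unique fixed point in 𝓜. -/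
noncomputable section

open Filter

variable {X : Type*} [NormedAddCommGroup X] [NormedSpace ℝ X] [CompleteSpace X]
variable {𝓑 : Type*} [NormedAddCommGroup 𝓑] [NormedSpace ℝ 𝓑] [CompleteSpace 𝓑]

set_option linter.unusedSectionVars false
set_option linter.unusedVariables false

lemma gamma_sub (ι : 𝓑 →ₗ[ℝ] (Zneg → X)) (γ : X → 𝓑)
    (hι : Function.Injective ι) (hγ : ∀ v : X, ι (γ v) = gammaSeq v)
    (v w : X) : γ v - γ w = γ (v - w) := by
  apply hι
  rw [map_sub, hγ, hγ, hγ]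
  funext j
  simp only [Pi.sub_apply, gammaSeq]
  split_ifs <;> simp

lemma gamma_norm (ι : 𝓑 →ₗ[ℝ] (Zneg → X)) (γ : X → 𝓑) {J : ℝ} {K M : ℕ → ℝ}
    (hAx : AxiomA ι J K M)
    (hι : Function.Injective ι) (hγ : ∀ v : X, ι (γ v) = gammaSeq v) (v : X) :
    ‖γ v‖ ≤ K 1 * ‖v‖ := by
  obtain ⟨hJ, hK, hM, hax⟩ := hAx
  set x : ℤ → X := fun j => if j = 1 then v else 0 with hx
  have h0 : ι (0 : 𝓑) = seg x 0 := by
    rw [map_zero]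
    funext j
    have hj := j.2
    simp only [seg, x, Pi.zero_apply]
    rw [if_neg (by omega)]
  obtain ⟨φ₁, hφ, _, hub⟩ := hax x 0 h0 1
  have hφγ : φ₁ = γ v := by
    apply hι
    rw [hφ, hγ]
    funext j
    have hj := j.2
    simp only [seg, x, gammaSeq]
    exact if_congr (by omega) rfl rfl
  have hsup : (⨆ j : Fin (1 + 1), ‖x ((j : ℕ) : ℤ)‖) ≤ ‖v‖ := by
    apply ciSup_le
    intro j
    simp only [x]
    split_ifs
    · exact le_rfl
    · simpa using norm_nonneg v
  rw [hφγ] at hub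
  calc ‖γ v‖ ≤ K 1 * (⨆ j : Fin (1 + 1), ‖x ((j : ℕ) : ℤ)‖) + M 1 * ‖(0 : 𝓑)‖ := hub
    _ ≤ K 1 * ‖v‖ + M 1 * ‖(0 : 𝓑)‖ :=
        add_le_add (mul_le_mul_of_nonneg_left hsup (hK 1)) le_rfl
    _ = K 1 * ‖v‖ := by rw [norm_zero, mul_zero, add_zero]

section Terms

variable (ι : 𝓑 →ₗ[ℝ] (Zneg → X)) (γ : X → 𝓑) {J : ℝ} {K M : ℕ → ℝ}
  (hAx : AxiomA ι J K M) (hι : Function.Injective ι)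
  (hγ : ∀ v : X, ι (γ v) = gammaSeq v)
  (𝒜 : ℕ → ℕ → 𝓑 →L[ℝ] 𝓑) (P : ℕ → 𝓑 →L[ℝ] 𝓑)
  (hker : ∀ (m n : ℕ) (φ : 𝓑), P n φ = 0 → P m (𝒜 m n φ) = 0)
  (f : ℕ → 𝓑 → X) (c : ℕ → ℝ) (hc : ∀ m, 0 < c m) (hf0 : ∀ m, f m 0 = 0)
  (hf : ∀ (m : ℕ) (φ ψ : 𝓑), ‖f m φ - f m ψ‖ ≤ c m * min 1 ‖φ - ψ‖)
  (hqsum : ∀ m : ℕ, Summable fun k : ℕ => c k * ‖Green 𝒜 P m (k + 1)‖)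

include hAx hι hγ hc hf0 hf hqsum

lemma term_norm (η : ∀ n : ℕ, Fn P n → 𝓑) (n m : ℕ) (φ : Fn P n) :
    ‖Green 𝒜 P n (m + 1) (γ (f m (𝒜 m n φ.1 + η m (kerMap 𝒜 P hker m n φ))))‖
      ≤ K 1 * (c m * ‖Green 𝒜 P n (m + 1)‖) := by
  have hK1 : 0 ≤ K 1 := hAx.2.1 1
  set u := 𝒜 m n φ.1 + η m (kerMap 𝒜 P hker m n φ)
  have h1 : ‖f m u‖ ≤ c m := by
    have h := hf m u 0
    rw [hf0, sub_zero] at h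
    refine h.trans ?_
    calc c m * min 1 ‖u - 0‖ ≤ c m * 1 := mul_le_mul_of_nonneg_left (min_le_left _ _) (hc m).le
      _ = c m := mul_one _
  calc ‖Green 𝒜 P n (m + 1) (γ (f m u))‖
      ≤ ‖Green 𝒜 P n (m + 1)‖ * ‖γ (f m u)‖ := (Green 𝒜 P n (m + 1)).le_opNorm _
    _ ≤ ‖Green 𝒜 P n (m + 1)‖ * (K 1 * ‖f m u‖) :=
        mul_le_mul_of_nonneg_left (gamma_norm ι γ hAx hι hγ _) (norm_nonneg _)
    _ ≤ ‖Green 𝒜 P n (m + 1)‖ * (K 1 * c m) :=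
        mul_le_mul_of_nonneg_left (mul_le_mul_of_nonneg_left h1 hK1) (norm_nonneg _)
    _ = K 1 * (c m * ‖Green 𝒜 P n (m + 1)‖) := by ring

lemma term_diff (η ξ : ∀ n : ℕ, Fn P n → 𝓑) (D : ℝ)
    (hpt : ∀ (m : ℕ) (ψ : Fn P m), ‖η m ψ - ξ m ψ‖ ≤ D) (n m : ℕ) (φ : Fn P n) :
    ‖Green 𝒜 P n (m + 1) (γ (f m (𝒜 m n φ.1 + η m (kerMap 𝒜 P hker m n φ))))
      - Green 𝒜 P n (m + 1) (γ (f m (𝒜 m n φ.1 + ξ m (kerMap 𝒜 P hker m n φ))))‖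
      ≤ K 1 * (c m * ‖Green 𝒜 P n (m + 1)‖) * D := by
  have hK1 : 0 ≤ K 1 := hAx.2.1 1
  set ψ := kerMap 𝒜 P hker m n φ
  set u := 𝒜 m n φ.1 + η m ψ
  set u' := 𝒜 m n φ.1 + ξ m ψ
  have hdmin : min 1 ‖u - u'‖ ≤ D := by
    have : u - u' = η m ψ - ξ m ψ := add_sub_add_left_eq_sub _ _ _
    rw [this]
    exact (min_le_right _ _).trans (hpt m ψ)
  have h1 : ‖f m u - f m u'‖ ≤ c m * D := by
    refine (hf m u u').trans (mul_le_mul_of_nonneg_left hdmin (hc m).le)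
  rw [← map_sub, gamma_sub ι γ hι hγ]
  calc ‖Green 𝒜 P n (m + 1) (γ (f m u - f m u'))‖
      ≤ ‖Green 𝒜 P n (m + 1)‖ * ‖γ (f m u - f m u')‖ := (Green 𝒜 P n (m + 1)).le_opNorm _
    _ ≤ ‖Green 𝒜 P n (m + 1)‖ * (K 1 * ‖f m u - f m u'‖) :=
        mul_le_mul_of_nonneg_left (gamma_norm ι γ hAx hι hγ _) (norm_nonneg _)
    _ ≤ ‖Green 𝒜 P n (m + 1)‖ * (K 1 * (c m * D)) :=
        mul_le_mul_of_nonneg_left (mul_le_mul_of_nonneg_left h1 hK1) (norm_nonneg _)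
    _ = K 1 * (c m * ‖Green 𝒜 P n (m + 1)‖) * D := by ring

lemma fmap_summable (η : ∀ n : ℕ, Fn P n → 𝓑) (n : ℕ) (φ : Fn P n) :
    Summable (fun m : ℕ =>
      Green 𝒜 P n (m + 1) (γ (f m (𝒜 m n φ.1 + η m (kerMap 𝒜 P hker m n φ))))) := by
  apply Summable.of_norm
  exact Summable.of_nonneg_of_le (fun _ => norm_nonneg _)
    (fun m => term_norm ι γ hAx hι hγ 𝒜 P hker f c hc hf0 hf hqsum η n m φ)
    ((hqsum n).mul_left (K 1))

lemma fmap_norm_bound (η : ∀ n : ℕ, Fn P n → 𝓑) (n : ℕ) (φ : Fn P n) :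
    ‖Fmap 𝒜 P hker γ f η n φ‖ ≤ K 1 * ∑' k : ℕ, c k * ‖Green 𝒜 P n (k + 1)‖ := by
  have hb := fun m => term_norm ι γ hAx hι hγ 𝒜 P hker f c hc hf0 hf hqsum η n m φ
  have hsum : Summable (fun m : ℕ =>
      ‖Green 𝒜 P n (m + 1) (γ (f m (𝒜 m n φ.1 + η m (kerMap 𝒜 P hker m n φ))))‖) :=
    Summable.of_nonneg_of_le (fun _ => norm_nonneg _) hb ((hqsum n).mul_left (K 1))
  calc ‖Fmap 𝒜 P hker γ f η n φ‖
      ≤ ∑' m : ℕ, ‖Green 𝒜 P n (m + 1) (γ (f m (𝒜 m n φ.1 + η m (kerMap 𝒜 P hker m n φ))))‖ :=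
        norm_tsum_le_tsum_norm hsum
    _ ≤ ∑' m : ℕ, K 1 * (c m * ‖Green 𝒜 P n (m + 1)‖) :=
        Summable.tsum_le_tsum hb hsum ((hqsum n).mul_left (K 1))
    _ = K 1 * ∑' k : ℕ, c k * ‖Green 𝒜 P n (k + 1)‖ := tsum_mul_left

lemma fmap_diff_bound (η ξ : ∀ n : ℕ, Fn P n → 𝓑) (D : ℝ) (hD : 0 ≤ D)
    (hpt : ∀ (m : ℕ) (ψ : Fn P m), ‖η m ψ - ξ m ψ‖ ≤ D) (n : ℕ) (φ : Fn P n) :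
    ‖Fmap 𝒜 P hker γ f η n φ - Fmap 𝒜 P hker γ f ξ n φ‖ ≤
      K 1 * (∑' k : ℕ, c k * ‖Green 𝒜 P n (k + 1)‖) * D := by
  have hg := fmap_summable ι γ hAx hι hγ 𝒜 P hker f c hc hf0 hf hqsum η n φ
  have hh := fmap_summable ι γ hAx hι hγ 𝒜 P hker f c hc hf0 hf hqsum ξ n φ
  have hb := fun m => term_diff ι γ hAx hι hγ 𝒜 P hker f c hc hf0 hf hqsum η ξ D hpt n m φ
  have hbsum : Summable (fun m : ℕ => K 1 * (c m * ‖Green 𝒜 P n (m + 1)‖) * D) :=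
    ((hqsum n).mul_left (K 1)).mul_right D
  have hnsum : Summable (fun m : ℕ =>
      ‖Green 𝒜 P n (m + 1) (γ (f m (𝒜 m n φ.1 + η m (kerMap 𝒜 P hker m n φ))))
        - Green 𝒜 P n (m + 1) (γ (f m (𝒜 m n φ.1 + ξ m (kerMap 𝒜 P hker m n φ))))‖) :=
    Summable.of_nonneg_of_le (fun _ => norm_nonneg _) hb hbsum
  have hsub : Fmap 𝒜 P hker γ f η n φ - Fmap 𝒜 P hker γ f ξ n φ =
      ∑' m : ℕ, (Green 𝒜 P n (m + 1) (γ (f m (𝒜 m n φ.1 + η m (kerMap 𝒜 P hker m n φ))))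
        - Green 𝒜 P n (m + 1) (γ (f m (𝒜 m n φ.1 + ξ m (kerMap 𝒜 P hker m n φ))))) :=
    (Summable.tsum_sub hg hh).symm
  rw [hsub]
  calc _ ≤ ∑' m : ℕ, ‖Green 𝒜 P n (m + 1) (γ (f m (𝒜 m n φ.1 + η m (kerMap 𝒜 P hker m n φ))))
        - Green 𝒜 P n (m + 1) (γ (f m (𝒜 m n φ.1 + ξ m (kerMap 𝒜 P hker m n φ))))‖ :=
        norm_tsum_le_tsum_norm hnsum
    _ ≤ ∑' m : ℕ, K 1 * (c m * ‖Green 𝒜 P n (m + 1)‖) * D := Summable.tsum_le_tsum hb hnsum hbsum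
    _ = (∑' m : ℕ, K 1 * (c m * ‖Green 𝒜 P n (m + 1)‖)) * D := tsum_mul_right
    _ = K 1 * (∑' k : ℕ, c k * ‖Green 𝒜 P n (k + 1)‖) * D := by rw [tsum_mul_left]

lemma fmap_continuous (η : ∀ n : ℕ, Fn P n → 𝓑) (hη : ∀ m, Continuous (η m)) (n : ℕ) :
    Continuous (fun φ : Fn P n => Fmap 𝒜 P hker γ f η n φ) := by
  have hγlip : LipschitzWith (K 1).toNNReal γ := by
    apply LipschitzWith.of_dist_le_mul
    intro v w
    rw [dist_eq_norm, dist_eq_norm, gamma_sub ι γ hι hγ]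
    refine (gamma_norm ι γ hAx hι hγ _).trans ?_
    exact mul_le_mul_of_nonneg_right (Real.le_coe_toNNReal _) (norm_nonneg _)
  have hflip : ∀ m, LipschitzWith (c m).toNNReal (f m) := by
    intro m
    apply LipschitzWith.of_dist_le_mul
    intro v w
    rw [dist_eq_norm, dist_eq_norm]
    refine (hf m v w).trans ?_
    calc c m * min 1 ‖v - w‖ ≤ c m * ‖v - w‖ :=
          mul_le_mul_of_nonneg_left (min_le_right _ _) (hc m).le
      _ ≤ (c m).toNNReal * ‖v - w‖ :=
          mul_le_mul_of_nonneg_right (Real.le_coe_toNNReal _) (norm_nonneg _)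
  unfold Fmap
  apply continuous_tsum (u := fun m : ℕ => K 1 * (c m * ‖Green 𝒜 P n (m + 1)‖))
  · intro m
    have c1 : Continuous fun φ : Fn P n => (𝒜 m n) φ.1 :=
      (𝒜 m n).continuous.comp continuous_subtype_val
    have c2 : Continuous fun φ : Fn P n => η m (kerMap 𝒜 P hker m n φ) :=
      (hη m).comp (Continuous.subtype_mk c1 _)
    exact (Green 𝒜 P n (m + 1)).continuous.comp
      (hγlip.continuous.comp ((hflip m).continuous.comp (c1.add c2)))
  · exact (hqsum n).mul_left (K 1)
  · intro m φ
    exact term_norm ι γ hAx hι hγ 𝒜 P hker f c hc hf0 hf hqsum η n m φ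

end Terms

/-- Assume `q := sup_{m∈ℤ⁺} Σ_{n∈ℤ⁺} c_n ‖𝒢(m,n+1)‖ < ∞` and let `F : 𝓜 → 𝓜` be
`F(η)(n,φ) = Σ_{m∈ℤ⁺} 𝒢(n,m+1) Γ f_m(𝒜(m,n)φ + η^m(𝒜(m,n)φ))`. Then for all `η, ξ ∈ 𝓜`
one has `‖F(η) - F(ξ)‖_∞ ≤ K(1) q ‖η - ξ‖_∞`, with `K` from axiom (A). In particular, if
`K(1)q < 1` then `F` is a contraction and has a unique fixed point in `𝓜`. -/
theorem stmt_7
    (ι : 𝓑 →ₗ[ℝ] (Zneg → X)) (hι : Function.Injective ι)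
    (J : ℝ) (K M : ℕ → ℝ) (hAx : AxiomA ι J K M)
    (A : ℕ → 𝓑 →L[ℝ] X) (𝒜 : ℕ → ℕ → 𝓑 →L[ℝ] 𝓑)
    (hsolA : ∀ (k : ℕ) (ψ : 𝓑) (y : ℤ → X), ι ψ = seg y (k : ℤ) → IsLinSolFrom ι A y k →
      ∀ m : ℕ, k ≤ m → ι (𝒜 m k ψ) = seg y (m : ℤ))
    (P : ℕ → 𝓑 →L[ℝ] 𝓑) (hproj : ∀ n, (P n).comp (P n) = P n)
    (hcomm : ∀ m n : ℕ, n ≤ m → (P m).comp (𝒜 m n) = (𝒜 m n).comp (P n))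
    (hker : ∀ (m n : ℕ) (φ : 𝓑), P n φ = 0 → P m (𝒜 m n φ) = 0)
    (hinv₁ : ∀ m n : ℕ, m ≤ n → ∀ φ : 𝓑, P n φ = 0 → 𝒜 n m (𝒜 m n φ) = φ)
    (hinv₂ : ∀ m n : ℕ, m ≤ n → ∀ φ : 𝓑, P m φ = 0 → 𝒜 m n (𝒜 n m φ) = φ)
    (γ : X → 𝓑) (hγ : ∀ v : X, ι (γ v) = gammaSeq v)
    (f : ℕ → 𝓑 → X) (c : ℕ → ℝ) (hc : ∀ m, 0 < c m) (hf0 : ∀ m, f m 0 = 0)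
    (hf : ∀ (m : ℕ) (φ ψ : 𝓑), ‖f m φ - f m ψ‖ ≤ c m * min 1 ‖φ - ψ‖)
    (hqsum : ∀ m : ℕ, Summable fun k : ℕ => c k * ‖Green 𝒜 P m (k + 1)‖)
    (hqbdd : BddAbove (Set.range fun m : ℕ => ∑' k : ℕ, c k * ‖Green 𝒜 P m (k + 1)‖)) :
    (∀ η ξ : ∀ n : ℕ, Fn P n → 𝓑, inM P η → inM P ξ →
        Mnorm P (fun n φ => Fmap 𝒜 P hker γ f η n φ - Fmap 𝒜 P hker γ f ξ n φ) ≤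
          K 1 * (⨆ m : ℕ, ∑' k : ℕ, c k * ‖Green 𝒜 P m (k + 1)‖) *
            Mnorm P (fun n φ => η n φ - ξ n φ))
    ∧ (K 1 * (⨆ m : ℕ, ∑' k : ℕ, c k * ‖Green 𝒜 P m (k + 1)‖) < 1 →
        ∃! η : ∀ n : ℕ, Fn P n → 𝓑, inM P η ∧
          ∀ (n : ℕ) (φ : Fn P n), Fmap 𝒜 P hker γ f η n φ = η n φ) := by
  have hK1 : 0 ≤ K 1 := hAx.2.1 1
  set q0 := ⨆ m : ℕ, ∑' k : ℕ, c k * ‖Green 𝒜 P m (k + 1)‖ with hq0def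
  have hSle : ∀ n : ℕ, (∑' k : ℕ, c k * ‖Green 𝒜 P n (k + 1)‖) ≤ q0 :=
    fun n => le_ciSup hqbdd n
  have hq00 : 0 ≤ q0 :=
    le_trans (tsum_nonneg fun k => mul_nonneg (hc k).le (norm_nonneg _)) (hSle 0)
  haveI : Nonempty ((n : ℕ) × Fn P n) := ⟨⟨0, ⟨0, map_zero _⟩⟩⟩
  have key : ∀ η ξ : ∀ n : ℕ, Fn P n → 𝓑, inM P η → inM P ξ →
      Mnorm P (fun n φ => Fmap 𝒜 P hker γ f η n φ - Fmap 𝒜 P hker γ f ξ n φ) ≤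
        K 1 * q0 * Mnorm P (fun n φ => η n φ - ξ n φ) := by
    intro η ξ hη hξ
    obtain ⟨-, C1, hC1⟩ := hη
    obtain ⟨-, C2, hC2⟩ := hξ
    have hbdd : BddAbove (Set.range fun p : (n : ℕ) × Fn P n => ‖η p.1 p.2 - ξ p.1 p.2‖) := by
      refine ⟨C1 + C2, ?_⟩
      rintro r ⟨p, rfl⟩
      exact (norm_sub_le _ _).trans (add_le_add (hC1 p.1 p.2) (hC2 p.1 p.2))
    have hpt : ∀ (m : ℕ) (ψ : Fn P m),
        ‖η m ψ - ξ m ψ‖ ≤ Mnorm P (fun n φ => η n φ - ξ n φ) :=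
      fun m ψ => le_ciSup hbdd (⟨m, ψ⟩ : (n : ℕ) × Fn P n)
    have hD : 0 ≤ Mnorm P (fun n φ => η n φ - ξ n φ) :=
      le_trans (norm_nonneg _) (hpt 0 ⟨0, map_zero _⟩)
    rw [Mnorm]
    apply ciSup_le
    intro p
    calc ‖Fmap 𝒜 P hker γ f η p.1 p.2 - Fmap 𝒜 P hker γ f ξ p.1 p.2‖
        ≤ K 1 * (∑' k : ℕ, c k * ‖Green 𝒜 P p.1 (k + 1)‖) *
            Mnorm P (fun n φ => η n φ - ξ n φ) :=
          fmap_diff_bound ι γ hAx hι hγ 𝒜 P hker f c hc hf0 hf hqsum η ξ _ hD hpt p.1 p.2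
      _ ≤ K 1 * q0 * Mnorm P (fun n φ => η n φ - ξ n φ) :=
          mul_le_mul_of_nonneg_right (mul_le_mul_of_nonneg_left (hSle p.1) hK1) hD
  refine ⟨key, ?_⟩
  intro hlt
  have hcont : ∀ (e : BoundedContinuousFunction ((n : ℕ) × Fn P n) 𝓑),
      Continuous fun p : (n : ℕ) × Fn P n =>
        Fmap 𝒜 P hker γ f (fun n ψ => e ⟨n, ψ⟩) p.1 p.2 := by
    intro e
    apply continuous_sigma
    intro n
    exact fmap_continuous ι γ hAx hι hγ 𝒜 P hker f c hc hf0 hf hqsum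
      (fun n ψ => e ⟨n, ψ⟩) (fun m => e.continuous.comp continuous_sigmaMk) n
  have hbound : ∀ (e : BoundedContinuousFunction ((n : ℕ) × Fn P n) 𝓑)
      (p : (n : ℕ) × Fn P n),
      ‖Fmap 𝒜 P hker γ f (fun n ψ => e ⟨n, ψ⟩) p.1 p.2‖ ≤ K 1 * q0 := by
    intro e p
    exact (fmap_norm_bound ι γ hAx hι hγ 𝒜 P hker f c hc hf0 hf hqsum
      (fun n ψ => e ⟨n, ψ⟩) p.1 p.2).trans
      (mul_le_mul_of_nonneg_left (hSle p.1) hK1)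
  set T : BoundedContinuousFunction ((n : ℕ) × Fn P n) 𝓑 →
      BoundedContinuousFunction ((n : ℕ) × Fn P n) 𝓑 := fun e =>
    BoundedContinuousFunction.ofNormedAddCommGroup
      (fun p => Fmap 𝒜 P hker γ f (fun n ψ => e ⟨n, ψ⟩) p.1 p.2)
      (hcont e) (K 1 * q0) (hbound e) with hT
  have hTdist : ∀ e e' : BoundedContinuousFunction ((n : ℕ) × Fn P n) 𝓑,
      dist (T e) (T e') ≤ (K 1 * q0) * dist e e' := by
    intro e e'
    rw [dist_eq_norm e e']
    rw [BoundedContinuousFunction.dist_le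
      (mul_nonneg (mul_nonneg hK1 hq00) (norm_nonneg _))]
    intro p
    have hpt : ∀ (m : ℕ) (ψ : Fn P m),
        ‖(fun n ψ => e ⟨n, ψ⟩) m ψ - (fun n ψ => e' ⟨n, ψ⟩) m ψ‖ ≤ ‖e - e'‖ := by
      intro m ψ
      simpa using (e - e').norm_coe_le_norm ⟨m, ψ⟩
    simp only [hT, BoundedContinuousFunction.coe_ofNormedAddCommGroup, dist_eq_norm]
    calc ‖Fmap 𝒜 P hker γ f (fun n ψ => e ⟨n, ψ⟩) p.1 p.2 -
          Fmap 𝒜 P hker γ f (fun n ψ => e' ⟨n, ψ⟩) p.1 p.2‖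
        ≤ K 1 * (∑' k : ℕ, c k * ‖Green 𝒜 P p.1 (k + 1)‖) * ‖e - e'‖ :=
          fmap_diff_bound ι γ hAx hι hγ 𝒜 P hker f c hc hf0 hf hqsum
            _ _ _ (norm_nonneg _) hpt p.1 p.2
      _ ≤ K 1 * q0 * ‖e - e'‖ :=
          mul_le_mul_of_nonneg_right (mul_le_mul_of_nonneg_left (hSle p.1) hK1) (norm_nonneg _)
  have hKq : (0 : ℝ) ≤ K 1 * q0 := mul_nonneg hK1 hq00
  have hCW : ContractingWith ⟨K 1 * q0, hKq⟩ T := by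
    constructor
    · exact_mod_cast hlt
    · exact LipschitzWith.of_dist_le_mul hTdist
  haveI : Nonempty (BoundedContinuousFunction ((n : ℕ) × Fn P n) 𝓑) := ⟨0⟩
  set estar := ContractingWith.fixedPoint T hCW with hestar
  have hfixe : T estar = estar := hCW.fixedPoint_isFixedPt
  set ηstar : ∀ n : ℕ, Fn P n → 𝓑 := fun n ψ => estar ⟨n, ψ⟩ with hηs
  have hηsM : inM P ηstar :=
    ⟨fun n => estar.continuous.comp continuous_sigmaMk,
      ⟨‖estar‖, fun n ψ => estar.norm_coe_le_norm ⟨n, ψ⟩⟩⟩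
  have hηsfix : ∀ (n : ℕ) (φ : Fn P n), Fmap 𝒜 P hker γ f ηstar n φ = ηstar n φ := by
    intro n φ
    have h2 := congrFun (congrArg DFunLike.coe hfixe) ⟨n, φ⟩
    simpa only [hT, BoundedContinuousFunction.coe_ofNormedAddCommGroup] using h2
  refine ⟨ηstar, ⟨hηsM, hηsfix⟩, ?_⟩
  rintro η' ⟨hη'M, hη'fix⟩
  have hkey := key η' ηstar hη'M hηsM
  have heqf : (fun n φ => Fmap 𝒜 P hker γ f η' n φ - Fmap 𝒜 P hker γ f ηstar n φ)
      = fun (n : ℕ) (φ : Fn P n) => η' n φ - ηstar n φ := by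
    funext n φ
    rw [hη'fix, hηsfix]
  rw [heqf] at hkey
  obtain ⟨-, C1, hC1⟩ := hη'M
  obtain ⟨-, C2, hC2⟩ := hηsM
  have hbdd : BddAbove (Set.range fun p : (n : ℕ) × Fn P n =>
      ‖η' p.1 p.2 - ηstar p.1 p.2‖) := by
    refine ⟨C1 + C2, ?_⟩
    rintro r ⟨p, rfl⟩
    exact (norm_sub_le _ _).trans (add_le_add (hC1 p.1 p.2) (hC2 p.1 p.2))
  have hpt : ∀ (m : ℕ) (ψ : Fn P m),
      ‖η' m ψ - ηstar m ψ‖ ≤ Mnorm P (fun n φ => η' n φ - ηstar n φ) :=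
    fun m ψ => le_ciSup hbdd (⟨m, ψ⟩ : (n : ℕ) × Fn P n)
  have hD0 : 0 ≤ Mnorm P (fun n φ => η' n φ - ηstar n φ) :=
    le_trans (norm_nonneg _) (hpt 0 ⟨0, map_zero _⟩)
  have hMz : Mnorm P (fun n φ => η' n φ - ηstar n φ) ≤ 0 := by nlinarith
  funext n ψ
  have h1 : ‖η' n ψ - ηstar n ψ‖ = 0 :=
    le_antisymm ((hpt n ψ).trans hMz) (norm_nonneg _)
  exact sub_eq_zero.mp (norm_eq_zero.mp h1)
end
end

section
/- (Main theorem, existence of conjugacy.) Assume q := sup_{m∈ℤ⁺} Σ_{n∈ℤ⁺} c_n ‖𝒢(m,n+1)‖ satisfies K(1)q < 1, where K is the function from axiom (A). Then there exists η ∈ 𝓜 such that, with h^n = Id_{F_n} + η^n, for every m ≥ n ≥ 0 and every φ ∈ F_n one has h^m(𝒜(m,n)φ) = R(m,n)(h^n(φ)). -/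
noncomputable section

open Filter

variable {X : Type*} [NormedAddCommGroup X] [NormedSpace ℝ X] [CompleteSpace X]
variable {𝓑 : Type*} [NormedAddCommGroup 𝓑] [NormedSpace ℝ 𝓑] [CompleteSpace 𝓑]

section AuxLemmas
variable {X : Type*} [NormedAddCommGroup X] [NormedSpace ℝ X] [CompleteSpace X]
variable {𝓑 : Type*} [NormedAddCommGroup 𝓑] [NormedSpace ℝ 𝓑] [CompleteSpace 𝓑]

private noncomputable def iterSeq {α : Type*} (ψ₀ : α) (F : ℕ → α → α) : ℕ → α
  | 0 => ψ₀
  | k + 1 => F k (iterSeq ψ₀ F k)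

theorem shift_exists (ι : 𝓑 →ₗ[ℝ] (Zneg → X)) {J : ℝ} {K M : ℕ → ℝ} (hAx : AxiomA ι J K M)
    (ψ : 𝓑) (v : X) :
    ∃ ψ' : 𝓑, ∀ j : Zneg, ι ψ' j = if h : (j : ℤ) = 0 then v else ι ψ ⟨j.1 + 1, by omega⟩ := by
  classical
  set x : ℤ → X := fun i => if h : i ≤ 0 then ι ψ ⟨i, h⟩ else v with hx
  have h0 : ι ψ = seg x 0 := by
    funext j
    simp only [seg, hx, zero_add]
    rw [dif_pos j.2]
  obtain ⟨ψ', h1, -, -⟩ := hAx.2.2.2 x ψ h0 1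
  refine ⟨ψ', fun j => ?_⟩
  rw [h1]
  simp only [seg, hx]
  by_cases hj : (j : ℤ) = 0
  · rw [dif_pos hj, dif_neg (by omega)]
  · rw [dif_neg hj, dif_pos (by have := j.2; omega)]
    exact congrArg (ι ψ) (Subtype.ext (show ((1:ℕ):ℤ) + j.1 = j.1 + 1 by push_cast; ring))

theorem exists_sol (ι : 𝓑 →ₗ[ℝ] (Zneg → X)) {J : ℝ} {K M : ℕ → ℝ} (hAx : AxiomA ι J K M)
    (g : ℕ → 𝓑 → X) (n : ℕ) (ψ₀ : 𝓑) :
    ∃ y : ℤ → X, ι ψ₀ = seg y n ∧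
      ∀ m : ℕ, n ≤ m → ∃ ψ : 𝓑, ι ψ = seg y (m : ℤ) ∧ y ((m : ℤ) + 1) = g m ψ := by
  classical
  let Ψ : ℕ → 𝓑 := iterSeq ψ₀ (fun k ih => (shift_exists ι hAx ih (g (n + k) ih)).choose)
  have hΨ0 : Ψ 0 = ψ₀ := rfl
  have hΨs : ∀ k (j : Zneg), ι (Ψ (k + 1)) j =
      if h : (j : ℤ) = 0 then g (n + k) (Ψ k) else ι (Ψ k) ⟨j.1 + 1, by omega⟩ := by
    intro k
    exact (shift_exists ι hAx (Ψ k) (g (n + k) (Ψ k))).choose_spec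
  let y : ℤ → X := fun i => if h : i ≤ (n : ℤ) then ι ψ₀ ⟨i - n, by omega⟩
    else ι (Ψ (i - n).toNat) ⟨0, le_refl 0⟩
  have key : ∀ k : ℕ, ∀ j : Zneg, ι (Ψ k) j = y ((n : ℤ) + k + j.1) := by
    intro k
    induction k with
    | zero =>
      intro j
      have hle : (n : ℤ) + (0 : ℕ) + j.1 ≤ n := by have := j.2; push_cast; omega
      simp only [y]
      rw [dif_pos hle, hΨ0]
      exact congrArg (ι ψ₀) (Subtype.ext (by push_cast; omega))
    | succ k ih =>
      intro j
      rw [hΨs]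
      by_cases hj : (j : ℤ) = 0
      · rw [dif_pos hj]
        have hgt : ¬ ((n : ℤ) + (k + 1 : ℕ) + j.1 ≤ n) := by push_cast; omega
        have htn : (((n : ℤ) + (k + 1 : ℕ) + j.1) - n).toNat = k + 1 := by push_cast; omega
        simp only [y]
        rw [dif_neg hgt, htn, hΨs]
        rw [dif_pos rfl]
      · rw [dif_neg hj]
        have := ih ⟨j.1 + 1, by have := j.2; omega⟩
        rw [this]
        exact congrArg y (by push_cast; ring)
  refine ⟨y, ?_, ?_⟩
  · funext j
    have := key 0 j
    rw [hΨ0] at this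
    rw [this]
    exact congrArg y (by push_cast; ring)
  · intro m hm
    refine ⟨Ψ (m - n), ?_, ?_⟩
    · funext j
      rw [key (m - n) j]
      exact congrArg y (by omega)
    · have hgt : ¬ ((m : ℤ) + 1 ≤ n) := by omega
      have htn : (((m : ℤ) + 1) - n).toNat = (m - n) + 1 := by omega
      show (if h : (m : ℤ) + 1 ≤ (n : ℤ) then _ else ι (Ψ (((m : ℤ) + 1 - n)).toNat) ⟨0, le_refl 0⟩) = _
      rw [dif_neg hgt, htn, hΨs]
      rw [dif_pos rfl]
      have hmn : n + (m - n) = m := by omega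
      rw [hmn]

end AuxLemmas
/-- Main theorem (existence of conjugacy). Assume
`q := sup_{m∈ℤ⁺} Σ_{n∈ℤ⁺} c_n ‖𝒢(m,n+1)‖` satisfies `K(1)q < 1`, with `K` from axiom (A).
Then there exists `η ∈ 𝓜` such that, with `h^n = Id_{F_n} + η^n`, for every `m ≥ n ≥ 0` and
every `φ ∈ F_n` one has `h^m(𝒜(m,n)φ) = R(m,n)(h^n(φ))`. -/
theorem stmt_8
    (ι : 𝓑 →ₗ[ℝ] (Zneg → X)) (hι : Function.Injective ι)
    (J : ℝ) (K M : ℕ → ℝ) (hAx : AxiomA ι J K M)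
    (A : ℕ → 𝓑 →L[ℝ] X) (𝒜 : ℕ → ℕ → 𝓑 →L[ℝ] 𝓑)
    (hsolA : ∀ (k : ℕ) (ψ : 𝓑) (y : ℤ → X), ι ψ = seg y (k : ℤ) → IsLinSolFrom ι A y k →
      ∀ m : ℕ, k ≤ m → ι (𝒜 m k ψ) = seg y (m : ℤ))
    (P : ℕ → 𝓑 →L[ℝ] 𝓑) (hproj : ∀ n, (P n).comp (P n) = P n)
    (hcomm : ∀ m n : ℕ, n ≤ m → (P m).comp (𝒜 m n) = (𝒜 m n).comp (P n))
    (hker : ∀ (m n : ℕ) (φ : 𝓑), P n φ = 0 → P m (𝒜 m n φ) = 0)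
    (hinv₁ : ∀ m n : ℕ, m ≤ n → ∀ φ : 𝓑, P n φ = 0 → 𝒜 n m (𝒜 m n φ) = φ)
    (hinv₂ : ∀ m n : ℕ, m ≤ n → ∀ φ : 𝓑, P m φ = 0 → 𝒜 m n (𝒜 n m φ) = φ)
    (γ : X → 𝓑) (hγ : ∀ v : X, ι (γ v) = gammaSeq v)
    (f : ℕ → 𝓑 → X) (c : ℕ → ℝ) (hc : ∀ m, 0 < c m) (hf0 : ∀ m, f m 0 = 0)
    (hf : ∀ (m : ℕ) (φ ψ : 𝓑), ‖f m φ - f m ψ‖ ≤ c m * min 1 ‖φ - ψ‖)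
    -- `R(m,n)` is the solution operator of the semilinear equation
    (R : ℕ → ℕ → 𝓑 → 𝓑)
    (hsolR : ∀ (k : ℕ) (ψ : 𝓑) (y : ℤ → X), ι ψ = seg y (k : ℤ) → IsSemiSolFrom ι A f y k →
      ∀ m : ℕ, k ≤ m → ι (R m k ψ) = seg y (m : ℤ))
    -- `q := sup_{m∈ℤ⁺} Σ_{n∈ℤ⁺} c_n ‖𝒢(m,n+1)‖` with `K(1)q < 1`
    (hqsum : ∀ m : ℕ, Summable fun k : ℕ => c k * ‖Green 𝒜 P m (k + 1)‖)
    (hqbdd : BddAbove (Set.range fun m : ℕ => ∑' k : ℕ, c k * ‖Green 𝒜 P m (k + 1)‖))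
    (hq : K 1 * (⨆ m : ℕ, ∑' k : ℕ, c k * ‖Green 𝒜 P m (k + 1)‖) < 1) :
    ∃ η : ∀ n : ℕ, Fn P n → 𝓑, inM P η ∧
      ∀ m n : ℕ, n ≤ m → ∀ φ : Fn P n,
        (kerMap 𝒜 P hker m n φ).1 + η m (kerMap 𝒜 P hker m n φ) =
          R m n (φ.1 + η n φ) := by
  classical
  have hproj' : ∀ n v, P n (P n v) = P n v := fun n v => by
    have h := hproj n; rw [ContinuousLinearMap.ext_iff] at h
    simpa using h v
  have linSol : ∀ (k : ℕ) (ψ : 𝓑), ∃ y, ι ψ = seg y k ∧ IsLinSolFrom ι A y k := by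
    intro k ψ
    obtain ⟨y, h1, h2⟩ := exists_sol ι hAx (fun m χ => A m χ) k ψ
    exact ⟨y, h1, h2⟩
  have Aid : ∀ (k : ℕ) (ψ : 𝓑), 𝒜 k k ψ = ψ := by
    intro k ψ
    obtain ⟨y, h1, h2⟩ := linSol k ψ
    exact hι ((hsolA k ψ y h1 h2 k le_rfl).trans h1.symm)
  have cocycle : ∀ (n m m' : ℕ), n ≤ m → m ≤ m' → ∀ ψ : 𝓑, 𝒜 m' m (𝒜 m n ψ) = 𝒜 m' n ψ := by
    intro n m m' h1 h2 ψ
    obtain ⟨y, hy, hsol⟩ := linSol n ψ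
    have s1 : ι (𝒜 m n ψ) = seg y m := hsolA n ψ y hy hsol m h1
    have hsolm : IsLinSolFrom ι A y m := fun m'' h => hsol m'' (h1.trans h)
    exact hι ((hsolA m (𝒜 m n ψ) y s1 hsolm m' h2).trans
      (hsolA n ψ y hy hsol m' (h1.trans h2)).symm)
  have flowTop : ∀ (t b cc : ℕ), b ≤ t → cc ≤ t → ∀ ξ : 𝓑, P b ξ = 0 →
      𝒜 t cc (𝒜 cc b ξ) = 𝒜 t b ξ := by
    intro t b cc hb hcc ξ hξ
    rcases le_total b cc with h | h
    · exact cocycle b cc t h hcc ξ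
    · rw [← cocycle cc b t h hb (𝒜 cc b ξ), hinv₁ cc b h ξ hξ]
  have Ainj : ∀ (t cc : ℕ), cc ≤ t → ∀ ψ χ : 𝓑, P cc ψ = 0 → P cc χ = 0 →
      𝒜 t cc ψ = 𝒜 t cc χ → ψ = χ := by
    intro t cc h ψ χ hψ hχ he
    rw [← hinv₂ cc t h ψ hψ, ← hinv₂ cc t h χ hχ, he]
  have flow : ∀ (a b cc : ℕ) (φ : 𝓑), P a φ = 0 → 𝒜 cc b (𝒜 b a φ) = 𝒜 cc a φ := by
    intro a b cc φ hφ
    have hat : a ≤ max a (max b cc) := le_max_left _ _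
    have hbt : b ≤ max a (max b cc) := le_trans (le_max_left _ _) (le_max_right _ _)
    have hct : cc ≤ max a (max b cc) := le_trans (le_max_right _ _) (le_max_right _ _)
    have h1 : P b (𝒜 b a φ) = 0 := hker _ _ _ hφ
    refine Ainj _ cc hct _ _ (hker _ _ _ h1) (hker _ _ _ hφ) ?_
    rw [flowTop _ b cc hbt hct _ h1, flowTop _ a b hat hbt φ hφ, flowTop _ a cc hat hct φ hφ]
  have greenStep : ∀ (m k : ℕ) (v : 𝓑), 𝒜 (m+1) m (Green 𝒜 P m (k+1) v)
      = Green 𝒜 P (m+1) (k+1) v - (if k = m then v else 0) := by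
    intro m k v
    have hw : P (k+1) (v - P (k+1) v) = 0 := by rw [map_sub, hproj' (k+1) v, sub_self]
    rcases lt_trichotomy k m with h | h | h
    · rw [if_neg (by omega : ¬ k = m), sub_zero]
      simp only [Green, if_pos (by omega : k + 1 ≤ m), if_pos (by omega : k + 1 ≤ m + 1),
        ContinuousLinearMap.comp_apply]
      exact cocycle (k+1) m (m+1) (by omega) (by omega) _
    · subst h
      simp only [Green, if_neg (by omega : ¬ k + 1 ≤ k), if_pos (le_refl (k+1)), if_pos rfl,
        ContinuousLinearMap.neg_apply, ContinuousLinearMap.comp_apply,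
        ContinuousLinearMap.sub_apply, ContinuousLinearMap.coe_id', id_eq, map_neg]
      rw [hinv₁ k (k+1) (by omega) _ hw, Aid]
      abel
      exact add_comm _ _
    · rw [if_neg (by omega : ¬ k = m), sub_zero]
      simp only [Green, if_neg (by omega : ¬ k + 1 ≤ m), if_neg (by omega : ¬ k + 1 ≤ m + 1),
        ContinuousLinearMap.neg_apply, ContinuousLinearMap.comp_apply,
        ContinuousLinearMap.sub_apply, ContinuousLinearMap.coe_id', id_eq, map_neg]
      rw [flow (k+1) m (m+1) _ hw]
  have hK1 : 0 ≤ K 1 := hAx.2.1 1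
  have hγn : ∀ v : X, ‖γ v‖ ≤ K 1 * ‖v‖ := by
    intro v
    set x : ℤ → X := fun i => if i = 1 then v else 0 with hx
    have h0 : ι (0 : 𝓑) = seg x 0 := by
      funext j
      have hj := j.2
      simp only [map_zero, seg, hx, zero_add]
      rw [if_neg (by omega)]
      rfl
    obtain ⟨φ₁, h1, -, h2⟩ := hAx.2.2.2 x 0 h0 1
    have hφ : φ₁ = γ v := by
      apply hι
      rw [h1, hγ]
      funext j
      have hj := j.2
      simp only [seg, gammaSeq, hx]
      by_cases hj0 : (j : ℤ) = 0
      · rw [if_pos (by omega), if_pos hj0]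
      · rw [if_neg (by omega), if_neg hj0]
    rw [hφ] at h2
    refine le_trans h2 ?_
    rw [norm_zero, mul_zero, add_zero]
    refine mul_le_mul_of_nonneg_left ?_ hK1
    apply ciSup_le
    intro i
    fin_cases i
    · simp [hx]
    · simp [hx]
  have hγsub : ∀ v w : X, γ v - γ w = γ (v - w) := by
    intro v w
    apply hι
    rw [map_sub, hγ, hγ, hγ]
    funext j
    simp only [Pi.sub_apply, gammaSeq]
    split <;> simp
  have hfb1 : ∀ (k : ℕ) (a : 𝓑), ‖f k a‖ ≤ c k := by
    intro k a
    have h := hf k a 0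
    rw [hf0 k, sub_zero, sub_zero] at h
    refine le_trans h ?_
    calc c k * min 1 ‖a‖ ≤ c k * 1 := mul_le_mul_of_nonneg_left (min_le_left _ _) (hc k).le
    _ = c k := mul_one _
  set S : ℕ → ℝ := fun m => ∑' k : ℕ, c k * ‖Green 𝒜 P m (k + 1)‖ with hS
  set q : ℝ := ⨆ m, S m with hq'
  have hSq : ∀ m, S m ≤ q := fun m => le_ciSup hqbdd m
  have hS0 : ∀ m, 0 ≤ S m :=
    fun m => tsum_nonneg (fun k => mul_nonneg (hc k).le (norm_nonneg _))
  have hq0 : 0 ≤ q := le_trans (hS0 0) (hSq 0)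
  have hqlt : K 1 * q < 1 := hq
  have hterm : ∀ (m k : ℕ) (w : 𝓑) (C : ℝ), ‖w‖ ≤ C * c k →
      ‖Green 𝒜 P m (k+1) w‖ ≤ C * (c k * ‖Green 𝒜 P m (k+1)‖) := by
    intro m k w C hwb
    calc ‖Green 𝒜 P m (k+1) w‖ ≤ ‖Green 𝒜 P m (k+1)‖ * ‖w‖ :=
      ContinuousLinearMap.le_opNorm _ _
    _ ≤ ‖Green 𝒜 P m (k+1)‖ * (C * c k) :=
      mul_le_mul_of_nonneg_left hwb (norm_nonneg _)
    _ = C * (c k * ‖Green 𝒜 P m (k+1)‖) := by ring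
  have hsumm : ∀ (m : ℕ) (w : ℕ → 𝓑) (C : ℝ), (∀ k, ‖w k‖ ≤ C * c k) →
      Summable (fun k : ℕ => Green 𝒜 P m (k+1) (w k)) := by
    intro m w C hwb
    exact Summable.of_norm_bounded
      ((hqsum m).mul_left C) (fun k => hterm m k (w k) C (hwb k))
  have htsum_norm : ∀ (m : ℕ) (w : ℕ → 𝓑) (C : ℝ), (∀ k, ‖w k‖ ≤ C * c k) →
      ‖∑' k : ℕ, Green 𝒜 P m (k+1) (w k)‖ ≤ C * S m := by
    intro m w C hwb
    have h1 : Summable (fun k : ℕ => ‖Green 𝒜 P m (k+1) (w k)‖) :=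
      Summable.of_nonneg_of_le (fun k => norm_nonneg _)
        (fun k => hterm m k (w k) C (hwb k)) ((hqsum m).mul_left C)
    calc ‖∑' k : ℕ, Green 𝒜 P m (k+1) (w k)‖ ≤ ∑' k : ℕ, ‖Green 𝒜 P m (k+1) (w k)‖ :=
      norm_tsum_le_tsum_norm h1
    _ ≤ ∑' k : ℕ, C * (c k * ‖Green 𝒜 P m (k+1)‖) :=
      Summable.tsum_le_tsum (fun k => hterm m k (w k) C (hwb k)) h1 ((hqsum m).mul_left C)
    _ = C * S m := by rw [tsum_mul_left]
  have fixEx : ∃ η : BoundedContinuousFunction ((n : ℕ) × Fn P n) 𝓑,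
      ∀ p : (n : ℕ) × Fn P n,
      η p = ∑' k : ℕ, Green 𝒜 P p.1 (k+1)
        (γ (f k (𝒜 k p.1 p.2.1 + η ⟨k, kerMap 𝒜 P hker k p.1 p.2⟩))) := by
    have harg : ∀ (η : BoundedContinuousFunction ((n : ℕ) × Fn P n) 𝓑)
        (p : (n : ℕ) × Fn P n) (k : ℕ),
        ‖γ (f k (𝒜 k p.1 p.2.1 + η ⟨k, kerMap 𝒜 P hker k p.1 p.2⟩))‖ ≤ K 1 * c k := by
      intro η p k
      exact le_trans (hγn _) (mul_le_mul_of_nonneg_left (hfb1 _ _) hK1)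
    have hcont : ∀ η : BoundedContinuousFunction ((n : ℕ) × Fn P n) 𝓑,
        Continuous (fun p : (n : ℕ) × Fn P n => ∑' k : ℕ, Green 𝒜 P p.1 (k+1)
          (γ (f k (𝒜 k p.1 p.2.1 + η ⟨k, kerMap 𝒜 P hker k p.1 p.2⟩)))) := by
      intro η
      apply continuous_sigma
      intro n
      refine continuous_tsum ?_ ((hqsum n).mul_left (K 1)) ?_
      · intro k
        have hLf : LipschitzWith (Real.toNNReal (c k)) (f k) :=
          LipschitzWith.of_dist_le_mul (fun a b => by
            rw [dist_eq_norm, dist_eq_norm, Real.coe_toNNReal _ (hc k).le]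
            exact le_trans (hf k a b)
              (mul_le_mul_of_nonneg_left (min_le_right _ _) (hc k).le))
        have hLγ : LipschitzWith (Real.toNNReal (K 1)) γ :=
          LipschitzWith.of_dist_le_mul (fun a b => by
            rw [dist_eq_norm, dist_eq_norm, Real.coe_toNNReal _ hK1, hγsub]
            exact hγn _)
        apply (Green 𝒜 P n (k+1)).continuous.comp
        apply hLγ.continuous.comp
        apply hLf.continuous.comp
        apply Continuous.add
        · exact (𝒜 k n).continuous.comp continuous_subtype_val
        · exact η.continuous.comp (continuous_sigmaMk.comp
            (Continuous.subtype_mk ((𝒜 k n).continuous.comp continuous_subtype_val) _))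
      · intro k φ
        exact hterm n k _ (K 1) (harg η ⟨n, φ⟩ k)
    have hbdd : ∀ (η : BoundedContinuousFunction ((n : ℕ) × Fn P n) 𝓑)
        (p : (n : ℕ) × Fn P n),
        ‖∑' k : ℕ, Green 𝒜 P p.1 (k+1)
          (γ (f k (𝒜 k p.1 p.2.1 + η ⟨k, kerMap 𝒜 P hker k p.1 p.2⟩)))‖ ≤ K 1 * q :=
      fun η p => le_trans (htsum_norm p.1 _ (K 1) (fun k => harg η p k))
        (mul_le_mul_of_nonneg_left (hSq p.1) hK1)
    set T : BoundedContinuousFunction ((n : ℕ) × Fn P n) 𝓑 →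
        BoundedContinuousFunction ((n : ℕ) × Fn P n) 𝓑 := fun η =>
      BoundedContinuousFunction.ofNormedAddCommGroup _ (hcont η) (K 1 * q) (hbdd η) with hT
    have hTapp : ∀ η p, T η p = ∑' k : ℕ, Green 𝒜 P p.1 (k+1)
        (γ (f k (𝒜 k p.1 p.2.1 + η ⟨k, kerMap 𝒜 P hker k p.1 p.2⟩))) := fun η p => rfl
    have hlip : LipschitzWith (Real.toNNReal (K 1 * q)) T := by
      apply LipschitzWith.of_dist_le_mul
      intro η η'
      rw [Real.coe_toNNReal _ (mul_nonneg hK1 hq0)]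
      rw [BoundedContinuousFunction.dist_le (by positivity)]
      intro p
      have hD : 0 ≤ dist η η' := dist_nonneg
      have hsu : Summable (fun k : ℕ => Green 𝒜 P p.1 (k+1)
          (γ (f k (𝒜 k p.1 p.2.1 + η ⟨k, kerMap 𝒜 P hker k p.1 p.2⟩)))) :=
        hsumm _ _ (K 1) (fun k => harg η p k)
      have hsu' : Summable (fun k : ℕ => Green 𝒜 P p.1 (k+1)
          (γ (f k (𝒜 k p.1 p.2.1 + η' ⟨k, kerMap 𝒜 P hker k p.1 p.2⟩)))) :=
        hsumm _ _ (K 1) (fun k => harg η' p k)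
      rw [dist_eq_norm]
      have heq : T η p - T η' p = ∑' k : ℕ, Green 𝒜 P p.1 (k+1)
          ((γ (f k (𝒜 k p.1 p.2.1 + η ⟨k, kerMap 𝒜 P hker k p.1 p.2⟩)))
            - (γ (f k (𝒜 k p.1 p.2.1 + η' ⟨k, kerMap 𝒜 P hker k p.1 p.2⟩)))) := by
        rw [hTapp, hTapp, ← Summable.tsum_sub hsu hsu']
        congr 1
        funext k
        rw [map_sub]
      rw [heq]
      have hwb : ∀ k : ℕ, ‖(γ (f k (𝒜 k p.1 p.2.1 + η ⟨k, kerMap 𝒜 P hker k p.1 p.2⟩)))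
          - (γ (f k (𝒜 k p.1 p.2.1 + η' ⟨k, kerMap 𝒜 P hker k p.1 p.2⟩)))‖
          ≤ (K 1 * dist η η') * c k := by
        intro k
        rw [hγsub]
        refine le_trans (hγn _) ?_
        have h1 : ‖f k (𝒜 k p.1 p.2.1 + η ⟨k, kerMap 𝒜 P hker k p.1 p.2⟩)
            - f k (𝒜 k p.1 p.2.1 + η' ⟨k, kerMap 𝒜 P hker k p.1 p.2⟩)‖ ≤ c k * dist η η' := by
          refine le_trans (hf k _ _) ?_
          refine mul_le_mul_of_nonneg_left ?_ (hc k).le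
          refine le_trans (min_le_right _ _) ?_
          rw [add_sub_add_left_eq_sub, ← dist_eq_norm]
          exact BoundedContinuousFunction.dist_coe_le_dist _
        calc K 1 * ‖f k (𝒜 k p.1 p.2.1 + η ⟨k, kerMap 𝒜 P hker k p.1 p.2⟩)
            - f k (𝒜 k p.1 p.2.1 + η' ⟨k, kerMap 𝒜 P hker k p.1 p.2⟩)‖
            ≤ K 1 * (c k * dist η η') := mul_le_mul_of_nonneg_left h1 hK1
        _ = (K 1 * dist η η') * c k := by ring
      refine le_trans (htsum_norm p.1 _ (K 1 * dist η η') hwb) ?_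
      calc (K 1 * dist η η') * S p.1 ≤ (K 1 * dist η η') * q :=
        mul_le_mul_of_nonneg_left (hSq p.1) (by positivity)
      _ = (K 1 * q) * dist η η' := by ring
    have hcontr : ContractingWith (Real.toNNReal (K 1 * q)) T :=
      ⟨Real.toNNReal_lt_one.2 hqlt, hlip⟩
    refine ⟨ContractingWith.fixedPoint T hcontr, fun p => ?_⟩
    have hfp := hcontr.fixedPoint_isFixedPt
    exact ((congrFun (congrArg _ hfp) p).symm.trans (hTapp _ p))
  obtain ⟨η₀, hfix⟩ := fixEx
  refine ⟨fun n φ => η₀ ⟨n, φ⟩, ⟨?_, ?_⟩, ?_⟩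
  · exact fun n => η₀.continuous.comp continuous_sigmaMk
  · exact ⟨‖η₀‖, fun n φ => η₀.norm_coe_le_norm ⟨n, φ⟩⟩
  intro m n hnm φ
  set Φ : ℕ → 𝓑 := fun k => 𝒜 k n φ.1 + η₀ ⟨k, kerMap 𝒜 P hker k n φ⟩ with hΦ
  set gg : ℕ → 𝓑 := fun k => γ (f k (Φ k)) with hgg
  have hggb : ∀ k, ‖gg k‖ ≤ K 1 * c k := by
    intro k
    rw [hgg]
    exact le_trans (hγn _) (mul_le_mul_of_nonneg_left (hfb1 _ _) hK1)
  have hηm : ∀ m' : ℕ, η₀ ⟨m', kerMap 𝒜 P hker m' n φ⟩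
      = ∑' k : ℕ, Green 𝒜 P m' (k+1) (gg k) := by
    intro m'
    rw [hfix ⟨m', kerMap 𝒜 P hker m' n φ⟩]
    congr 1
    funext k
    have h1 : 𝒜 k m' ((kerMap 𝒜 P hker m' n φ).1) = 𝒜 k n φ.1 := flow n m' k φ.1 φ.2
    have h2 : kerMap 𝒜 P hker k m' (kerMap 𝒜 P hker m' n φ) = kerMap 𝒜 P hker k n φ :=
      Subtype.ext h1
    rw [h2, h1, hgg, hΦ]
  have hstep : ∀ m' : ℕ, n ≤ m' →
      𝒜 (m'+1) m' (Φ m') + γ (f m' (Φ m')) = Φ (m'+1) := by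
    intro m' hm'
    have hsg : Summable (fun k : ℕ => Green 𝒜 P m' (k+1) (gg k)) := hsumm m' gg (K 1) hggb
    have hsg' : Summable (fun k : ℕ => Green 𝒜 P (m'+1) (k+1) (gg k)) :=
      hsumm (m'+1) gg (K 1) hggb
    have hsd : Summable (fun k : ℕ => if k = m' then gg m' else (0:𝓑)) :=
      (hasSum_ite_eq m' (gg m')).summable
    have e1 : ∀ k : ℕ, 𝒜 (m'+1) m' (Green 𝒜 P m' (k+1) (gg k))
        = Green 𝒜 P (m'+1) (k+1) (gg k) - (if k = m' then gg m' else 0) := by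
      intro k
      rw [greenStep]
      by_cases h : k = m'
      · subst h; rfl
      · rw [if_neg h, if_neg h]
    calc 𝒜 (m'+1) m' (Φ m') + γ (f m' (Φ m'))
        = 𝒜 (m'+1) m' (𝒜 m' n φ.1) + 𝒜 (m'+1) m' (η₀ ⟨m', kerMap 𝒜 P hker m' n φ⟩)
          + gg m' := by rw [hΦ, map_add, hgg]
    _ = 𝒜 (m'+1) n φ.1 + (∑' k : ℕ, 𝒜 (m'+1) m' (Green 𝒜 P m' (k+1) (gg k))) + gg m' := by
        rw [cocycle n m' (m'+1) hm' (Nat.le_succ m'), hηm m',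
          ContinuousLinearMap.map_tsum _ hsg]
    _ = 𝒜 (m'+1) n φ.1 + ((∑' k : ℕ, Green 𝒜 P (m'+1) (k+1) (gg k))
          - (∑' k : ℕ, if k = m' then gg m' else 0)) + gg m' := by
        rw [tsum_congr e1, Summable.tsum_sub hsg' hsd]
    _ = 𝒜 (m'+1) n φ.1 + (∑' k : ℕ, Green 𝒜 P (m'+1) (k+1) (gg k)) := by
        rw [show (∑' k : ℕ, if k = m' then gg m' else 0) = gg m' from tsum_ite_eq m' (fun _ => gg m')]
        abel
    _ = Φ (m'+1) := by simp only [hΦ]; rw [hηm (m'+1)]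
  obtain ⟨y, hy0, hysol⟩ := exists_sol ι hAx (fun k χ => A k χ + f k χ) n (Φ n)
  have hseg : ∀ m', n ≤ m' → ι (Φ m') = seg y m' := by
    intro m'
    induction m' with
    | zero =>
      intro hm'
      have hn0 : n = 0 := Nat.le_zero.mp hm'
      subst hn0
      exact hy0
    | succ m' ih =>
      intro hm'
      rcases Nat.lt_or_ge m' n with h | h
      · have hx : n = m' + 1 := by omega
        subst hx
        exact hy0
      · have ihm := ih h
        obtain ⟨ψ, hψ1, hψ2⟩ := hysol m' h
        have hψΦ : ψ = Φ m' := hι (hψ1.trans ihm.symm)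
        rw [hψΦ] at hψ2
        obtain ⟨z, hz0, hzsol⟩ := linSol m' (Φ m')
        have hz1 : ι (𝒜 (m'+1) m' (Φ m')) = seg z ((m':ℤ)+1) := by
          have := hsolA m' (Φ m') z hz0 hzsol (m'+1) (Nat.le_succ m')
          rwa [Nat.cast_add, Nat.cast_one] at this
        obtain ⟨ψ', hψ'1, hψ'2⟩ := hzsol m' le_rfl
        have hψ'Φ : ψ' = Φ m' := hι (hψ'1.trans hz0.symm)
        rw [hψ'Φ] at hψ'2
        rw [← hstep m' h, map_add, hz1, hγ]
        funext j
        have hj := j.2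
        simp only [Pi.add_apply, seg, gammaSeq]
        by_cases hj0 : (j : ℤ) = 0
        · rw [if_pos hj0]
          have e0 : ((m' : ℤ) + 1) + j.1 = (m' : ℤ) + 1 := by omega
          have e1 : ((m'+1 : ℕ) : ℤ) + j.1 = (m' : ℤ) + 1 := by omega
          rw [e0, e1, hψ'2, hψ2]
        · rw [if_neg hj0, add_zero]
          have hjj : (j : ℤ) + 1 ≤ 0 := by omega
          have h1 : seg z ((m':ℤ)+1) j = ι (Φ m') ⟨j.1 + 1, hjj⟩ := by
            rw [hz0]
            simp only [seg]
            exact congrArg z (by ring)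
          have h2 : seg y ((m'+1 : ℕ)) j = ι (Φ m') ⟨j.1 + 1, hjj⟩ := by
            rw [ihm]
            simp only [seg]
            exact congrArg y (by push_cast; ring)
          calc seg z ((m':ℤ)+1) j = ι (Φ m') ⟨j.1 + 1, hjj⟩ := h1
          _ = seg y ((m'+1 : ℕ)) j := h2.symm
  have hRm : ι (R m n (Φ n)) = seg y m := hsolR n (Φ n) y hy0 hysol m hnm
  have hRΦ : R m n (Φ n) = Φ m := hι (hRm.trans (hseg m hnm).symm)
  have hn' : Φ n = φ.1 + η₀ ⟨n, φ⟩ := by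
    have h1 : kerMap 𝒜 P hker n n φ = φ := Subtype.ext (Aid n φ.1)
    simp only [hΦ]
    rw [h1, Aid n φ.1]
  have hm' : (kerMap 𝒜 P hker m n φ).1 + η₀ ⟨m, kerMap 𝒜 P hker m n φ⟩ = Φ m := by
    simp only [hΦ]
    rfl
  rw [hm', ← hn', hRΦ]
end
end

section
/- (Main theorem, injectivity.) Assume the Lipschitz constants are constant, c_n = C > 0 for all n ∈ ℤ⁺, and that q := sup_{m∈ℤ⁺} Σ_{n∈ℤ⁺} c_n ‖𝒢(m,n+1)‖ satisfies K(1)q < 1, where K is the function from axiom (A). Let η ∈ 𝓜 be the function from the main theorem satisfying h^m(𝒜(m,n)φ) = R(m,n)(h^n(φ)) for all m ≥ n ≥ 0 and φ ∈ F_n, where h^n = Id_{F_n} + η^n. Then for every n ∈ ℤ⁺ the map h^n : F_n → B is one-to-one. -/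
noncomputable section

open Filter

variable {X : Type*} [NormedAddCommGroup X] [NormedSpace ℝ X] [CompleteSpace X]
variable {𝓑 : Type*} [NormedAddCommGroup 𝓑] [NormedSpace ℝ 𝓑] [CompleteSpace 𝓑]

/-!
If `h^n φ = h^n ψ`, the conjugacy gives `h^m(𝒜(m,n)φ) = h^m(𝒜(m,n)ψ)` for all `m ≥ n`, so the
forward orbit `𝒜(m,n)(φ - ψ) = η^m(𝒜(m,n)ψ) - η^m(𝒜(m,n)φ)` stays bounded by `2‖η‖_∞`. Since
`φ - ψ ∈ F_n`, it is recovered from its orbit as `φ - ψ = -𝒢(n,m)𝒜(m,n)(φ - ψ)` for `m > n`,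
and `‖𝒢(n,m)‖ → 0` because `Σ_m ‖𝒢(n,m+1)‖` converges. Hence `φ = ψ`.
-/

theorem eq_zero_of_tendsto_opNorm_of_eventually_eq_apply {E F : Type*} [SeminormedAddCommGroup E]
    [NormedAddCommGroup F] [NormedSpace ℝ E] [NormedSpace ℝ F] {T : ℕ → E →L[ℝ] F}
    (hT : Tendsto (fun k => ‖T k‖) atTop (nhds 0)) {y : ℕ → E} {B : ℝ}
    (hy : ∀ᶠ k in atTop, ‖y k‖ ≤ B) {z : F} (hz : ∀ᶠ k in atTop, T k (y k) = z) : z = 0 := by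
  have hlim : Tendsto (fun k => ‖T k‖ * B) atTop (nhds 0) := by
    simpa using hT.mul_const B
  have hle : ‖z‖ ≤ 0 := by
    refine ge_of_tendsto hlim ?_
    filter_upwards [hy, hz] with k hyk hzk
    calc ‖z‖ = ‖T k (y k)‖ := by rw [hzk]
      _ ≤ ‖T k‖ * ‖y k‖ := (T k).le_opNorm _
      _ ≤ ‖T k‖ * B := by gcongr
  exact norm_le_zero_iff.mp hle

theorem Green_apply_eq_neg_of_lt {E : Type*} [NormedAddCommGroup E] [NormedSpace ℝ E]
    {𝒜 : ℕ → ℕ → E →L[ℝ] E} {P : ℕ → E →L[ℝ] E}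
    (hker : ∀ (m n : ℕ) (φ : E), P n φ = 0 → P m (𝒜 m n φ) = 0)
    (hinv₂ : ∀ m n : ℕ, m ≤ n → ∀ φ : E, P m φ = 0 → 𝒜 m n (𝒜 n m φ) = φ)
    {n m : ℕ} (hnm : n < m) {z : E} (hz : P n z = 0) :
    Green 𝒜 P n m (𝒜 m n z) = -z := by
  simp [Green, not_le.mpr hnm, hker m n z hz, hinv₂ n m hnm.le z hz]

theorem norm_sub_le_of_add_eq_add {E : Type*} [SeminormedAddCommGroup E] {a b c d : E}
    (h : a + c = b + d) : ‖a - b‖ ≤ ‖c‖ + ‖d‖ := by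
  rw [sub_eq_sub_iff_add_eq_add.mpr (h.trans (add_comm b d))]
  exact (norm_sub_le d c).trans_eq (add_comm _ _)

theorem stmt_9_general
    (𝒜 : ℕ → ℕ → 𝓑 →L[ℝ] 𝓑)
    (P : ℕ → 𝓑 →L[ℝ] 𝓑)
    (hker : ∀ (m n : ℕ) (φ : 𝓑), P n φ = 0 → P m (𝒜 m n φ) = 0)
    (hinv₂ : ∀ m n : ℕ, m ≤ n → ∀ φ : 𝓑, P m φ = 0 → 𝒜 m n (𝒜 n m φ) = φ)
    -- the Lipschitz constants are constant: `c_n = C > 0`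
    (C : ℝ) (hC : 0 < C)
    (R : ℕ → ℕ → 𝓑 → 𝓑)
    (hqsum : ∀ m : ℕ, Summable fun k : ℕ => C * ‖Green 𝒜 P m (k + 1)‖)
    -- `η` is the function from the main theorem satisfying the conjugacy
    (η : ∀ n : ℕ, Fn P n → 𝓑) (hη : inM P η)
    (hconj : ∀ m n : ℕ, n ≤ m → ∀ φ : Fn P n,
      (kerMap 𝒜 P hker m n φ).1 + η m (kerMap 𝒜 P hker m n φ) = R m n (φ.1 + η n φ)) :
    ∀ n : ℕ, Function.Injective (fun φ : Fn P n => φ.1 + η n φ) := by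
  obtain ⟨-, N, hN⟩ := hη
  intro n φ ψ hφψ
  have hz : P n (φ.1 - ψ.1) = 0 := by simp [φ.2, ψ.2]
  have horbit : ∀ m, n ≤ m → ‖𝒜 m n (φ.1 - ψ.1)‖ ≤ N + N := fun m hm => by
    have h := hconj m n hm φ
    rw [show φ.1 + η n φ = ψ.1 + η n ψ from hφψ, ← hconj m n hm ψ] at h
    rw [map_sub]
    exact (norm_sub_le_of_add_eq_add h).trans (add_le_add (hN m _) (hN m _))
  have hGreen : Tendsto (fun k => ‖Green 𝒜 P n (k + 1)‖) atTop (nhds 0) :=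
    ((summable_mul_left_iff hC.ne').mp (hqsum n)).tendsto_atTop_zero
  have hzero : -(φ.1 - ψ.1) = 0 :=
    eq_zero_of_tendsto_opNorm_of_eventually_eq_apply hGreen
      (eventually_ge_atTop n |>.mono fun k hk => horbit (k + 1) (by omega))
      (eventually_ge_atTop n |>.mono fun k hk =>
        Green_apply_eq_neg_of_lt hker hinv₂ (by omega) hz)
  exact Subtype.ext (sub_eq_zero.mp (neg_eq_zero.mp hzero))

/-- Main theorem (injectivity). Assume the Lipschitz constants are constant, `c_n = C > 0`,
and `q := sup_{m∈ℤ⁺} Σ_{n∈ℤ⁺} c_n ‖𝒢(m,n+1)‖` satisfies `K(1)q < 1`, with `K` from axiom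
(A). If `η ∈ 𝓜` satisfies the conjugacy `h^m(𝒜(m,n)φ) = R(m,n)(h^n(φ))` for all `m ≥ n ≥ 0`
and `φ ∈ F_n`, where `h^n = Id_{F_n} + η^n`, then each `h^n : F_n → 𝓑` is one-to-one. -/
theorem stmt_9
    (ι : 𝓑 →ₗ[ℝ] (Zneg → X)) (hι : Function.Injective ι)
    (J : ℝ) (K M : ℕ → ℝ) (hAx : AxiomA ι J K M)
    (A : ℕ → 𝓑 →L[ℝ] X) (𝒜 : ℕ → ℕ → 𝓑 →L[ℝ] 𝓑)
    (hsolA : ∀ (k : ℕ) (ψ : 𝓑) (y : ℤ → X), ι ψ = seg y (k : ℤ) → IsLinSolFrom ι A y k →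
      ∀ m : ℕ, k ≤ m → ι (𝒜 m k ψ) = seg y (m : ℤ))
    (P : ℕ → 𝓑 →L[ℝ] 𝓑) (hproj : ∀ n, (P n).comp (P n) = P n)
    (hcomm : ∀ m n : ℕ, n ≤ m → (P m).comp (𝒜 m n) = (𝒜 m n).comp (P n))
    (hker : ∀ (m n : ℕ) (φ : 𝓑), P n φ = 0 → P m (𝒜 m n φ) = 0)
    (hinv₁ : ∀ m n : ℕ, m ≤ n → ∀ φ : 𝓑, P n φ = 0 → 𝒜 n m (𝒜 m n φ) = φ)
    (hinv₂ : ∀ m n : ℕ, m ≤ n → ∀ φ : 𝓑, P m φ = 0 → 𝒜 m n (𝒜 n m φ) = φ)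
    (γ : X → 𝓑) (hγ : ∀ v : X, ι (γ v) = gammaSeq v)
    -- the Lipschitz constants are constant: `c_n = C > 0`
    (f : ℕ → 𝓑 → X) (C : ℝ) (hC : 0 < C) (hf0 : ∀ m, f m 0 = 0)
    (hf : ∀ (m : ℕ) (φ ψ : 𝓑), ‖f m φ - f m ψ‖ ≤ C * min 1 ‖φ - ψ‖)
    (R : ℕ → ℕ → 𝓑 → 𝓑)
    (hsolR : ∀ (k : ℕ) (ψ : 𝓑) (y : ℤ → X), ι ψ = seg y (k : ℤ) → IsSemiSolFrom ι A f y k →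
      ∀ m : ℕ, k ≤ m → ι (R m k ψ) = seg y (m : ℤ))
    (hqsum : ∀ m : ℕ, Summable fun k : ℕ => C * ‖Green 𝒜 P m (k + 1)‖)
    (hqbdd : BddAbove (Set.range fun m : ℕ => ∑' k : ℕ, C * ‖Green 𝒜 P m (k + 1)‖))
    (hq : K 1 * (⨆ m : ℕ, ∑' k : ℕ, C * ‖Green 𝒜 P m (k + 1)‖) < 1)
    -- `η` is the function from the main theorem satisfying the conjugacy
    (η : ∀ n : ℕ, Fn P n → 𝓑) (hη : inM P η)
    (hconj : ∀ m n : ℕ, n ≤ m → ∀ φ : Fn P n,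
      (kerMap 𝒜 P hker m n φ).1 + η m (kerMap 𝒜 P hker m n φ) = R m n (φ.1 + η n φ)) :
    ∀ n : ℕ, Function.Injective (fun φ : Fn P n => φ.1 + η n φ) :=
  stmt_9_general 𝒜 P hker hinv₂ C hC R hqsum η hη hconj
end
end
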